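/- Let b of length k be v-shaped and s-dominating, and let w = split^k(b) (comparators on pairs (j, j+k/2) for all j = 1..k/2). Then left(w) is v-shaped and s-dominating, right(w) is bitonic, and every element of left(w) is ≥ every element of right(w). -/

import Mathlib

/-!
Being v-shaped on `[1, k]` is discrete quasiconvexity: no term exceeds both an earlier and a
later one. With `k = 2m`, the left half `max (b j) (b (j + m))` is a pointwise maximum of two
quasiconvex sequences, hence v-shaped. The indices `j ≤ m` with `b j < b (j + m)` form a final
segment `[t, m]`, so the right half `min (b j) (b (j + m))`, read cyclically from `t`, is the
window `b t, …, b (t + m - 1)` of `b`. That window is v-shaped, and a v-shaped sequence rotated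
to start at its valley rises and then falls, so the right half is bitonic. The remaining two
claims are single applications of quasiconvexity.
-/

def Bitonic (n : ℕ) (x : ℕ → ℕ) : Prop :=
  ∃ r i, i ≤ n ∧
    (∀ p q, 1 ≤ p → p ≤ q → q ≤ i → x ((p - 1 + r) % n + 1) ≤ x ((q - 1 + r) % n + 1)) ∧
    (∀ p q, i ≤ p → p ≤ q → q ≤ n → x ((q - 1 + r) % n + 1) ≤ x ((p - 1 + r) % n + 1))

def VShaped (k : ℕ) (b : ℕ → ℕ) : Prop :=
  ∃ i, 1 ≤ i ∧ i ≤ k ∧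
    (∀ p q, 1 ≤ p → p ≤ q → q ≤ i → b q ≤ b p) ∧
    (∀ p q, i ≤ p → p ≤ q → q ≤ k → b p ≤ b q)

def SDominating (k : ℕ) (b : ℕ → ℕ) : Prop :=
  ∀ j, 1 ≤ j → j ≤ k / 2 → b (k - j + 1) ≤ b j

open OrderDual

/-- The discrete analogue of `QuasiconvexOn` on the index interval `[1, k]`. -/
def QuasiconvexOnIcc {α : Type*} [LinearOrder α] (k : ℕ) (f : ℕ → α) : Prop :=
  ∀ p q r, 1 ≤ p → p ≤ q → q ≤ r → r ≤ k → f q ≤ max (f p) (f r)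

namespace QuasiconvexOnIcc

variable {α : Type*} [LinearOrder α] {k m s : ℕ} {f g : ℕ → α}

theorem congr (hf : QuasiconvexOnIcc k f) (h : ∀ j, 1 ≤ j → j ≤ k → f j = g j) :
    QuasiconvexOnIcc k g := by
  intro p q r hp hpq hqr hr
  rw [← h p hp (by omega), ← h q (by omega) (by omega), ← h r (by omega) hr]
  exact hf p q r hp hpq hqr hr

theorem mono (hf : QuasiconvexOnIcc k f) (h : m ≤ k) : QuasiconvexOnIcc m f :=
  fun p q r hp hpq hqr hr => hf p q r hp hpq hqr (hr.trans h)

theorem comp_add (hf : QuasiconvexOnIcc k f) (h : m + s ≤ k) :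
    QuasiconvexOnIcc m (fun p => f (p + s)) :=
  fun p q r hp hpq hqr hr => hf (p + s) (q + s) (r + s) (by omega) (by omega) (by omega) (by omega)

theorem sup (hf : QuasiconvexOnIcc k f) (hg : QuasiconvexOnIcc k g) :
    QuasiconvexOnIcc k (fun j => max (f j) (g j)) := by
  intro p q r hp hpq hqr hr
  exact max_le
    ((hf p q r hp hpq hqr hr).trans (max_le_max (le_max_left _ _) (le_max_left _ _)))
    ((hg p q r hp hpq hqr hr).trans (max_le_max (le_max_right _ _) (le_max_right _ _)))

theorem exists_valley (hf : QuasiconvexOnIcc k f) (hk : 1 ≤ k) :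
    ∃ i, 1 ≤ i ∧ i ≤ k ∧
      (∀ p q, 1 ≤ p → p ≤ q → q ≤ i → f q ≤ f p) ∧
      (∀ p q, i ≤ p → p ≤ q → q ≤ k → f p ≤ f q) := by
  obtain ⟨i, hi, hmin⟩ := (Finset.Icc 1 k).exists_min_image f (Finset.nonempty_Icc.mpr hk)
  rw [Finset.mem_Icc] at hi
  refine ⟨i, hi.1, hi.2, fun p q hp hpq hqi => ?_, fun p q hip hpq hq => ?_⟩
  · exact (hf p q i hp hpq hqi hi.2).trans_eq
      (max_eq_left (hmin p (Finset.mem_Icc.mpr ⟨hp, by omega⟩)))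
  · exact (hf i p q hi.1 hip hpq hq).trans_eq
      (max_eq_right (hmin q (Finset.mem_Icc.mpr ⟨by omega, hq⟩)))

theorem le_of_lt {p p' q q' : ℕ} (hf : QuasiconvexOnIcc k f) (hp : 1 ≤ p) (hpp' : p ≤ p')
    (hp'q : p' ≤ q) (hqq' : q ≤ q') (hq' : q' ≤ k) (h : f p < f q) : f p' ≤ f q' := by
  by_contra! h'
  have hp' : f p' ≤ f p := by
    have := hf p p' q' hp hpp' (by omega) hq'
    rw [le_max_iff] at this
    exact this.resolve_right h'.not_ge
  have hq : f q ≤ max (f p') (f q') := hf p' q q' (by omega) hp'q hqq' hq'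
  rw [max_eq_left h'.le] at hq
  exact (h.trans_le (hq.trans hp')).false

end QuasiconvexOnIcc

theorem vShaped_iff {k : ℕ} {b : ℕ → ℕ} : VShaped k b ↔ 1 ≤ k ∧ QuasiconvexOnIcc k b := by
  refine ⟨fun ⟨i, hi1, hik, hdec, hinc⟩ => ⟨by omega, fun p q r hp hpq hqr hr => ?_⟩,
    fun ⟨hk, hb⟩ => hb.exists_valley hk⟩
  rcases le_total q i with hq | hq
  · exact le_max_of_le_left (hdec p q hp hpq hq)
  · exact le_max_of_le_right (hinc q r hq hqr hr)

/-- The terms `x 1, …, x m` read cyclically from `x (r + 1)`: the rotation used in `Bitonic`. -/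
def cyclicShift {α : Type*} (m r : ℕ) (x : ℕ → α) : ℕ → α :=
  fun p => x ((p - 1 + r) % m + 1)

section CyclicShift

variable {α : Type*} {m r s p : ℕ} {x y : ℕ → α}

theorem cyclicShift_cyclicShift :
    cyclicShift m r (cyclicShift m s x) = cyclicShift m (s + r) x := by
  funext p
  simp only [cyclicShift, Nat.add_sub_cancel, Nat.mod_add_mod, Nat.add_assoc, Nat.add_comm r s]

theorem cyclicShift_congr (hm : 0 < m) (h : ∀ p, 1 ≤ p → p ≤ m → x p = y p) :
    cyclicShift m r x = cyclicShift m r y :=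
  funext fun p => h _ (by omega) (by have := Nat.mod_lt (p - 1 + r) hm; omega)

theorem cyclicShift_apply_of_le (hp : 1 ≤ p) (h : p + r ≤ m) :
    cyclicShift m r x p = x (p + r) := by
  unfold cyclicShift
  rw [Nat.mod_eq_of_lt (by omega)]
  congr 1
  omega

theorem cyclicShift_apply_of_lt (hp : 1 ≤ p) (h : m < p + r) (h' : p + r ≤ 2 * m) :
    cyclicShift m r x p = x (p + r - m) := by
  unfold cyclicShift
  rw [Nat.mod_eq_sub_mod (by omega), Nat.mod_eq_of_lt (by omega)]
  congr 1
  omega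

end CyclicShift

section Bitonic

variable {m s : ℕ} {x y : ℕ → ℕ}

theorem bitonic_iff : Bitonic m x ↔ ∃ r i, i ≤ m ∧
    (∀ p q, 1 ≤ p → p ≤ q → q ≤ i → cyclicShift m r x p ≤ cyclicShift m r x q) ∧
    (∀ p q, i ≤ p → p ≤ q → q ≤ m → cyclicShift m r x q ≤ cyclicShift m r x p) :=
  Iff.rfl

theorem Bitonic.of_cyclicShift (h : Bitonic m (cyclicShift m s x)) : Bitonic m x := by
  rw [bitonic_iff] at h ⊢
  simp only [cyclicShift_cyclicShift] at h
  obtain ⟨r, h⟩ := h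
  exact ⟨s + r, h⟩

theorem Bitonic.congr (hm : 0 < m) (h : ∀ p, 1 ≤ p → p ≤ m → x p = y p) (hx : Bitonic m x) :
    Bitonic m y := by
  rw [bitonic_iff] at hx ⊢
  simpa only [cyclicShift_congr hm h] using hx

theorem VShaped.bitonic (h : VShaped m x) : Bitonic m x := by
  obtain ⟨a, ha1, ham, hdec, hinc⟩ := h
  -- Started at the valley, the sequence rises to `x m` and then falls from `x 1`.
  have hpeak : QuasiconvexOnIcc m (fun p => toDual (cyclicShift m (a - 1) x p)) := by
    intro p q r hp hpq hqr hr
    rcases le_or_gt (q + (a - 1)) m with hq | hq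
    · apply le_max_of_le_left
      rw [toDual_le_toDual, cyclicShift_apply_of_le hp (by omega), cyclicShift_apply_of_le
        (by omega) hq]
      exact hinc _ _ (by omega) (by omega) (by omega)
    · apply le_max_of_le_right
      rw [toDual_le_toDual, cyclicShift_apply_of_lt (by omega) hq (by omega),
        cyclicShift_apply_of_lt (by omega) (by omega) (by omega)]
      exact hdec _ _ (by omega) (by omega) (by omega)
  obtain ⟨i, -, hi, hup, hdown⟩ := hpeak.exists_valley (by omega)
  exact ⟨a - 1, i, hi, hup, hdown⟩

end Bitonic

/-- `w = split^(2m)(b)` on the first `2m` indices. -/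
def IsSplit (m : ℕ) (b w : ℕ → ℕ) : Prop :=
  ∀ j, 1 ≤ j → j ≤ m → w j = max (b j) (b (j + m)) ∧ w (j + m) = min (b j) (b (j + m))

section Split

variable {m : ℕ} {b w : ℕ → ℕ}

theorem QuasiconvexOnIcc.exists_crossing (hb : QuasiconvexOnIcc (2 * m) b) :
    ∃ t, 1 ≤ t ∧ t ≤ m + 1 ∧ (∀ j, 1 ≤ j → j < t → b (j + m) ≤ b j) ∧
      (∀ j, t ≤ j → j ≤ m → b j ≤ b (j + m)) := by
  classical
  have hex : ∃ t, 1 ≤ t ∧ (m < t ∨ b t < b (t + m)) := ⟨m + 1, by omega, .inl (by omega)⟩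
  obtain ⟨ht1, hcross⟩ := Nat.find_spec hex
  refine ⟨Nat.find hex, ht1, Nat.find_min' hex ⟨by omega, .inl (by omega)⟩, ?_, ?_⟩
  · intro j hj1 hjt
    have := Nat.find_min hex hjt
    push Not at this
    exact (this hj1).2
  · intro j htj hjm
    rcases hcross with h | h
    · omega
    · exact hb.le_of_lt ht1 htj (by omega) (by omega) (by omega) h

theorem IsSplit.vShaped_left (hw : IsSplit m b w) (hb : QuasiconvexOnIcc (2 * m) b)
    (hm : 1 ≤ m) : VShaped m w :=
  vShaped_iff.mpr ⟨hm, ((hb.mono (by omega)).sup (hb.comp_add (by omega))).congr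
    fun j hj1 hj => (hw j hj1 hj).1.symm⟩

theorem IsSplit.sDominating_left (hw : IsSplit m b w) (hb : QuasiconvexOnIcc (2 * m) b)
    (hs : SDominating (2 * m) b) : SDominating m w := by
  intro j hj1 hj
  rw [(hw _ (by omega) (by omega)).1, (hw j hj1 (by omega)).1]
  refine max_le (hb j (m - j + 1) (j + m) hj1 (by omega) (by omega) (by omega)) ?_
  rw [show m - j + 1 + m = 2 * m - j + 1 by omega]
  exact le_max_of_le_left (hs j hj1 (by omega))

theorem IsSplit.bitonic_right (hw : IsSplit m b w) (hb : QuasiconvexOnIcc (2 * m) b)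
    (hm : 1 ≤ m) : Bitonic m (fun j => w (j + m)) := by
  obtain ⟨t, ht1, htm, hlow, hhigh⟩ := hb.exists_crossing
  have hwindow : ∀ p, 1 ≤ p → p ≤ m →
      b (p + (t - 1)) = cyclicShift m (t - 1) (fun j => w (j + m)) p := by
    intro p hp hpm
    rcases le_or_gt (p + (t - 1)) m with h | h
    · rw [cyclicShift_apply_of_le hp h, (hw _ (by omega) h).2,
        min_eq_left (hhigh _ (by omega) h)]
    · rw [cyclicShift_apply_of_lt hp h (by omega), (hw _ (by omega) (by omega)).2,
        min_eq_right (hlow _ (by omega) (by omega)), Nat.sub_add_cancel h.le]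
  exact ((vShaped_iff.mpr ⟨hm, hb.comp_add (by omega)⟩).bitonic.congr (by omega)
    hwindow).of_cyclicShift

theorem IsSplit.right_le_left (hw : IsSplit m b w) (hb : QuasiconvexOnIcc (2 * m) b)
    {i j : ℕ} (hi1 : 1 ≤ i) (hi : i ≤ m) (hj1 : 1 ≤ j) (hj : j ≤ m) : w (j + m) ≤ w i := by
  rw [(hw j hj1 hj).2, (hw i hi1 hi).1]
  rcases le_or_gt i j with h | h
  · exact (min_le_left _ _).trans (hb i j (i + m) hi1 h (by omega) (by omega))
  · exact (min_le_right _ _).trans (hb i (j + m) (i + m) hi1 (by omega) (by omega) (by omega))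

end Split

/-- If `b` of length `k` (a power of two) is v-shaped and s-dominating and
`w = split^k(b)`, then `left(w)` is v-shaped and s-dominating, `right(w)` is
bitonic, and `left(w) ⪰ right(w)`. -/
theorem split_vshape_sdom (k : ℕ) (hk : ∃ c, 1 ≤ c ∧ k = 2 ^ c)
    (b w : ℕ → ℕ) (hv : VShaped k b) (hs : SDominating k b)
    (hw : ∀ j, 1 ≤ j → j ≤ k / 2 →
      w j = max (b j) (b (j + k / 2)) ∧ w (j + k / 2) = min (b j) (b (j + k / 2))) :
    VShaped (k / 2) w ∧ SDominating (k / 2) w ∧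
      Bitonic (k / 2) (fun j => w (j + k / 2)) ∧
      ∀ i j, 1 ≤ i → i ≤ k / 2 → 1 ≤ j → j ≤ k / 2 → w (j + k / 2) ≤ w i := by
  obtain ⟨m, hm, rfl⟩ : ∃ m, 1 ≤ m ∧ k = 2 * m := by
    obtain ⟨c, hc, rfl⟩ := hk
    exact ⟨2 ^ (c - 1), Nat.one_le_two_pow, by rw [← pow_succ']; congr 1; omega⟩
  rw [Nat.mul_div_cancel_left m two_pos] at hw ⊢
  have hsplit : IsSplit m b w := hw
  have hb := (vShaped_iff.mp hv).2
  exact ⟨hsplit.vShaped_left hb hm, hsplit.sDominating_left hb hs, hsplit.bitonic_right hb hm,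
    fun i j hi1 hi hj1 hj => hsplit.right_le_left hb hi1 hi hj1 hj⟩
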